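/- Let ρ : [0,∞) → (0,∞) be defined by ρ(x) = e^{-(x+1)cos(ln(x+1)) + 1}. Then ∫_0^∞ ρ(x) dx = +∞. -/
import Mathlib

open Real MeasureTheory Set ENNReal

theorem stmt_17 (ρ : ℝ → ℝ)
    (hρ : ∀ x : ℝ, ρ x = Real.exp (-(x + 1) * Real.cos (Real.log (x + 1)) + 1)) :
    ∫⁻ x in Set.Ioi (0 : ℝ), ENNReal.ofReal (ρ x) = ⊤ := by
  by_contra h
  obtain ⟨n, hn⟩ := ENNReal.exists_nat_gt h
  -- consider interval I_n
  set a : ℝ := Real.exp (Real.pi / 2 + 2 * n * Real.pi) with ha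
  set b : ℝ := Real.exp (Real.pi / 2 + Real.pi + 2 * n * Real.pi) with hb
  have hab : a < b := by
    apply Real.exp_lt_exp.2; nlinarith [Real.pi_pos]
  have ha1 : (1:ℝ) ≤ a := by
    rw [ha, show (1:ℝ) = Real.exp 0 from (Real.exp_zero).symm]
    apply Real.exp_le_exp.2
    have : (0:ℝ) ≤ (n:ℝ) := Nat.cast_nonneg n
    nlinarith [Real.pi_pos]
  -- pointwise lower bound on Ioo (a-1) (b-1)
  have key : ∀ x ∈ Set.Ioo (a - 1) (b - 1), (1:ℝ≥0∞) ≤ ENNReal.ofReal (ρ x) := by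
    intro x hx
    have hx1 : a < x + 1 := by linarith [hx.1]
    have hx2 : x + 1 < b := by linarith [hx.2]
    have hxpos : (0:ℝ) < x + 1 := by linarith
    have hlog1 : Real.pi / 2 + 2 * n * Real.pi < Real.log (x + 1) := by
      rw [ha] at hx1
      calc Real.pi / 2 + 2 * n * Real.pi = Real.log a := by rw [ha, Real.log_exp]
        _ < Real.log (x + 1) := Real.log_lt_log (by positivity) hx1
    have hlog2 : Real.log (x + 1) < Real.pi / 2 + Real.pi + 2 * n * Real.pi := by
      calc Real.log (x + 1) < Real.log b := Real.log_lt_log hxpos hx2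
        _ = Real.pi / 2 + Real.pi + 2 * n * Real.pi := by rw [hb, Real.log_exp]
    have hcos : Real.cos (Real.log (x + 1)) ≤ 0 := by
      have : Real.cos (Real.log (x + 1)) =
          Real.cos (Real.log (x + 1) - (n : ℤ) * (2 * Real.pi)) := by
        rw [Real.cos_sub_int_mul_two_pi]
      rw [this]
      apply Real.cos_nonpos_of_pi_div_two_le_of_le
      · push_cast; nlinarith
      · push_cast; nlinarith
    have hρx : (1:ℝ) ≤ ρ x := by
      rw [hρ x]
      apply Real.one_le_exp
      nlinarith
    calc (1:ℝ≥0∞) = ENNReal.ofReal 1 := by simp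
      _ ≤ ENNReal.ofReal (ρ x) := ENNReal.ofReal_le_ofReal hρx
  -- lower bound the integral
  have hsub : Set.Ioo (a - 1) (b - 1) ⊆ Set.Ioi (0:ℝ) := by
    intro x hx; simp only [Set.mem_Ioi]; linarith [hx.1]
  have hle : ENNReal.ofReal ((b - 1) - (a - 1)) ≤
      ∫⁻ x in Set.Ioi (0 : ℝ), ENNReal.ofReal (ρ x) := by
    calc ENNReal.ofReal ((b - 1) - (a - 1))
        = volume (Set.Ioo (a - 1) (b - 1)) := (Real.volume_Ioo).symm
      _ = ∫⁻ _ in Set.Ioo (a - 1) (b - 1), 1 := (setLIntegral_one _).symm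
      _ ≤ ∫⁻ x in Set.Ioo (a - 1) (b - 1), ENNReal.ofReal (ρ x) :=
          setLIntegral_mono (by
            have hre : ρ = fun x => Real.exp (-(x + 1) * Real.cos (Real.log (x + 1)) + 1) :=
              funext hρ
            rw [hre]
            exact (Real.measurable_exp.comp (((measurable_id.add_const 1).neg.mul
              (Real.continuous_cos.measurable.comp
                (Real.measurable_log.comp (measurable_id.add_const 1)))).add_const 1)).ennreal_ofReal) key
      _ ≤ ∫⁻ x in Set.Ioi (0 : ℝ), ENNReal.ofReal (ρ x) :=
          lintegral_mono_set hsub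
  -- but b - a ≥ n
  have hlen : (n:ℝ) ≤ (b - 1) - (a - 1) := by
    have h1 : b = a * Real.exp Real.pi := by
      rw [ha, hb, ← Real.exp_add]; ring_nf
    have h2 : (2:ℝ) ≤ Real.exp Real.pi := by
      have := Real.add_one_le_exp Real.pi
      nlinarith [Real.pi_gt_three]
    have h3 : (n:ℝ) ≤ a := by
      have := Real.add_one_le_exp (Real.pi / 2 + 2 * n * Real.pi)
      have hn0 : (0:ℝ) ≤ (n:ℝ) := Nat.cast_nonneg n
      rw [ha]; nlinarith [Real.pi_gt_three]
    nlinarith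
  have : (n : ℝ≥0∞) ≤ ∫⁻ x in Set.Ioi (0 : ℝ), ENNReal.ofReal (ρ x) := by
    calc (n : ℝ≥0∞) = ENNReal.ofReal (n:ℝ) := by simp
      _ ≤ ENNReal.ofReal ((b - 1) - (a - 1)) := ENNReal.ofReal_le_ofReal hlen
      _ ≤ _ := hle
  exact absurd (this.trans_lt hn) (lt_irrefl _)
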